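/- arXiv:1910.09500 — 2 statements merged into one kernel-verified Lean document; each statement's English description precedes it below -/
import Mathlib

section
/- Let λ : ℤ₊ → ℝ satisfy (UB). For every k ≥ 1 and all y, x ∈ ℤ₊: φ^{(k)}(y,x) = −(1/λ(y)) · (1/(2πi)) ∮_{C_λ} ψ_y(w) p_x(w) w^{−k} dw. -/
open Complex MeasureTheory Finset
open scoped Real ComplexOrder

/-- ψ_x(w) = ∏_{k=0}^{x} λ(k)/(λ(k)−w). -/
noncomputable def psiF (lam : ℕ → ℝ) (x : ℕ) (w : ℂ) : ℂ :=
  ∏ k ∈ Finset.range (x + 1), (lam k : ℂ) / ((lam k : ℂ) - w)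

/-- p_x(w) = ∏_{k=0}^{x−1} (λ(k)−w)/λ(k). -/
noncomputable def pF (lam : ℕ → ℝ) (x : ℕ) (w : ℂ) : ℂ :=
  ∏ k ∈ Finset.range x, (((lam k : ℂ) - w) / (lam k : ℂ))

/-- e^{tL}(x,y) := −(1/λ(y))·(1/(2πi)) ∮_{|w|=R} ψ_y(w) p_x(w) e^{−tw} dw,
the contour being the counterclockwise circle of radius R centred at 0. -/
noncomputable def eL (lam : ℕ → ℝ) (R t : ℝ) (x y : ℕ) : ℂ :=
  -(1 / (lam y : ℂ)) * ((2 * (Real.pi : ℂ) * Complex.I)⁻¹ *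
    ∮ w in C(0, R), psiF lam y w * pF lam x w * Complex.exp (-(t : ℂ) * w))

/-- φ(y,x) = −λ(y)⁻¹ 1(x > y). -/
noncomputable def phiF (lam : ℕ → ℝ) (y x : ℕ) : ℝ :=
  if y < x then -(lam y)⁻¹ else 0

/-- Convolution powers: `phik lam k` is φ^{(k+1)}, i.e. `phik lam 0 = φ^{(1)} = φ` and
φ^{(k+1)}(y,x) = Σ_z φ(y,z) φ^{(k)}(z,x) (the sum over z ∈ ℤ₊ reduces to z < x since
φ^{(k)}(z,x) vanishes unless z < x). -/
noncomputable def phik (lam : ℕ → ℝ) : ℕ → ℕ → ℕ → ℝ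
  | 0, y, x => phiF lam y x
  | (k + 1), y, x => ∑ z ∈ Finset.range x, phiF lam y z * phik lam k z x

/-!
Unfolding the recursion, `φ^{(n+2)}(y,x) = -λ(y)⁻¹ ∑_{y<z<x} φ^{(n+1)}(z,x)`, so it suffices that
the contour integrals obey the same recursion and the same initial values. Everything rests on
two closed forms of `ψ_y p_x`: for `y < x` it is the polynomial `∏_{y<j<x} (λ(j) - w)/λ(j)`, whose
residue against `w⁻¹` is its value `1` at `0`; for `x ≤ y` it is `∏_{x≤j≤y} λ(j)/(λ(j) - w)`,
which is `O(1/w)` at infinity, so its integral against `w^{-k}` vanishes (push the contour to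
infinity). The recursion comes from the telescoping identity `w λ(z)⁻¹ ψ_z = ψ_z - ψ_{z-1}`, which
turns `∑_{y<z<x} λ(z)⁻¹ ψ_z p_x` into `(1 - ψ_y p_x)/w`, together with `∮ w^{-k-1} dw = 0`.
-/

open Filter Topology Bornology

theorem circleIntegral_eq_zero_of_tendsto_mul_cobounded {f : ℂ → ℂ} {R : ℝ} (hR : 0 < R)
    (hf : ∀ z : ℂ, R ≤ ‖z‖ → DifferentiableAt ℂ f z)
    (hlim : Tendsto (fun z => z * f z) (cobounded ℂ) (𝓝 0)) :
    (∮ z in C(0, R), f z) = 0 := by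
  have hshift : ∀ r, R ≤ r → (∮ z in C(0, r), f z) = ∮ z in C(0, R), f z := fun r hr =>
    circleIntegral_eq_of_differentiable_on_annulus_off_countable hR hr Set.countable_empty
      (fun z hz => (hf z (by simpa using hz.2)).continuousAt.continuousWithinAt)
      (fun z hz => hf z (le_of_lt (by simpa using hz.1.2)))
  refine norm_le_zero_iff.mp (le_of_forall_pos_le_add fun ε hε => ?_)
  obtain ⟨r₀, -, hr₀⟩ := (hasBasis_cobounded_norm.tendsto_iff Metric.nhds_basis_closedBall).mp
    hlim (ε / (2 * π)) (by positivity)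
  set r := max r₀ R
  have hr : 0 < r := hR.trans_le (le_max_right _ _)
  have hbound : ∀ z ∈ Metric.sphere (0 : ℂ) r, ‖f z‖ ≤ ε / (2 * π) / r := by
    intro z hz
    have hz' : ‖z‖ = r := by simpa using hz
    have := hr₀ z (show r₀ ≤ ‖z‖ from hz' ▸ le_max_left _ _)
    rw [Metric.mem_closedBall, dist_zero_right, norm_mul, hz'] at this
    rwa [le_div_iff₀ hr, mul_comm]
  calc ‖∮ z in C(0, R), f z‖ = ‖∮ z in C(0, r), f z‖ := by rw [hshift r (le_max_right _ _)]
    _ ≤ 2 * π * r * (ε / (2 * π) / r) :=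
      circleIntegral.norm_integral_le_of_norm_le_const hr.le hbound
    _ = 0 + ε := by field_simp; ring

theorem tendsto_prod_div_sub_cobounded {ι : Type*} {s : Finset ι} (hs : s.Nonempty) (a : ι → ℂ) :
    Tendsto (fun z => ∏ j ∈ s, a j / (a j - z)) (cobounded ℂ) (𝓝 0) := by
  obtain ⟨i, hi⟩ := hs
  have h : ∀ j ∈ s, Tendsto (fun z => a j / (a j - z)) (cobounded ℂ) (𝓝 0) := fun j _ => by
    simpa [div_eq_mul_inv] using
      (tendsto_inv₀_cobounded.comp (tendsto_const_sub_cobounded (a j))).const_mul (a j)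
  simpa [prod_eq_zero hi] using tendsto_finsetProd s h

theorem circleIntegral_prod_div_sub_mul_zpow_eq_zero {ι : Type*} {s : Finset ι}
    (hs : s.Nonempty) {a : ι → ℂ} {R : ℝ} (ha : ∀ j ∈ s, ‖a j‖ < R) {e : ℤ} (he : e ≤ -1) :
    (∮ z in C(0, R), (∏ j ∈ s, a j / (a j - z)) * z ^ e) = 0 := by
  obtain ⟨i, hi⟩ := hs
  have hR : 0 < R := (norm_nonneg _).trans_lt (ha i hi)
  refine circleIntegral_eq_zero_of_tendsto_mul_cobounded hR (fun z hz => ?_) ?_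
  · have hz0 : z ≠ 0 := norm_pos_iff.mp (hR.trans_le hz)
    refine (DifferentiableAt.fun_finsetProd fun j hj => ?_).mul
      (differentiableAt_zpow.mpr (Or.inl hz0))
    refine (differentiableAt_const _).div ((differentiableAt_const _).sub differentiableAt_id) ?_
    exact sub_ne_zero.mpr fun h => (h ▸ ha j hj).not_ge hz
  · refine squeeze_zero_norm' ?_
      (by simpa only [norm_zero] using (tendsto_prod_div_sub_cobounded ⟨i, hi⟩ a).norm)
    filter_upwards [hasBasis_cobounded_norm.mem_of_mem (i := 1) trivial] with z hz
    have hz0 : z ≠ 0 := norm_pos_iff.mp (one_pos.trans_le hz)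
    rw [mul_left_comm, norm_mul, ← zpow_one_add₀ hz0, norm_zpow]
    exact mul_le_of_le_one_right (norm_nonneg _) (zpow_le_one_of_nonpos₀ hz (by omega))

section ProductIdentities

variable {lam : ℕ → ℝ} {w : ℂ}

theorem pF_eq_inv_prod (x : ℕ) :
    pF lam x w = (∏ k ∈ range x, (lam k : ℂ) / ((lam k : ℂ) - w))⁻¹ := by
  simp only [pF, ← prod_inv_distrib, inv_div]

theorem psiF_mul_pF_of_le (hq : ∀ k, (lam k : ℂ) / ((lam k : ℂ) - w) ≠ 0) {x y : ℕ}
    (h : x ≤ y + 1) :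
    psiF lam y w * pF lam x w = ∏ k ∈ Ico x (y + 1), (lam k : ℂ) / ((lam k : ℂ) - w) := by
  rw [psiF, pF_eq_inv_prod, ← prod_range_mul_prod_Ico _ h, mul_right_comm,
    mul_inv_cancel₀ (prod_ne_zero_iff.mpr fun k _ => hq k), one_mul]

theorem psiF_mul_pF_of_lt (hq : ∀ k, (lam k : ℂ) / ((lam k : ℂ) - w) ≠ 0) {x y : ℕ}
    (h : y < x) :
    psiF lam y w * pF lam x w = ∏ k ∈ Ico (y + 1) x, ((lam k : ℂ) - w) / (lam k : ℂ) := by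
  rw [psiF, pF_eq_inv_prod, ← prod_range_mul_prod_Ico _ h, mul_inv, ← mul_assoc,
    mul_inv_cancel₀ (prod_ne_zero_iff.mpr fun k _ => hq k), one_mul, ← prod_inv_distrib]
  simp only [inv_div]

theorem psiF_succ (y : ℕ) :
    psiF lam (y + 1) w = psiF lam y w * ((lam (y + 1) : ℂ) / ((lam (y + 1) : ℂ) - w)) :=
  prod_range_succ _ _

theorem mul_sum_Ico_inv_mul_psiF (hq : ∀ k, (lam k : ℂ) / ((lam k : ℂ) - w) ≠ 0) {y m : ℕ}
    (h : y ≤ m) :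
    w * ∑ z ∈ Ico (y + 1) (m + 1), (lam z : ℂ)⁻¹ * psiF lam z w = psiF lam m w - psiF lam y w := by
  have hstep : ∀ z, w * ((lam (z + 1) : ℂ)⁻¹ * psiF lam (z + 1) w)
      = psiF lam (z + 1) w - psiF lam z w := fun z => by
    obtain ⟨h0, hw⟩ := div_ne_zero_iff.mp (hq (z + 1))
    rw [psiF_succ]
    field_simp
    ring
  rw [← sum_Ico_add' (c := 1), mul_sum, sum_congr rfl fun z _ => hstep z,
    sum_Ico_sub (fun z => psiF lam z w) h]

theorem sum_Ico_inv_mul_psiF_mul_pF_mul_zpow (hq : ∀ k, (lam k : ℂ) / ((lam k : ℂ) - w) ≠ 0)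
    (hw : w ≠ 0) {y m : ℕ} (h : y ≤ m) (e : ℤ) :
    ∑ z ∈ Ico (y + 1) (m + 1), (lam z : ℂ)⁻¹ * (psiF lam z w * pF lam (m + 1) w * w ^ e)
      = w ^ (e - 1) - psiF lam y w * pF lam (m + 1) w * w ^ (e - 1) := by
  have hone : psiF lam m w * pF lam (m + 1) w = 1 := by
    rw [psiF_mul_pF_of_le hq le_rfl, Ico_self, prod_empty]
  calc ∑ z ∈ Ico (y + 1) (m + 1), (lam z : ℂ)⁻¹ * (psiF lam z w * pF lam (m + 1) w * w ^ e)
      = (w * ∑ z ∈ Ico (y + 1) (m + 1), (lam z : ℂ)⁻¹ * psiF lam z w) * pF lam (m + 1) w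
          * w ^ (e - 1) := by
        rw [zpow_sub_one₀ hw, mul_sum, sum_mul, sum_mul]
        refine sum_congr rfl fun z _ => ?_
        field_simp
    _ = w ^ (e - 1) - psiF lam y w * pF lam (m + 1) w * w ^ (e - 1) := by
        rw [mul_sum_Ico_inv_mul_psiF hq h]
        linear_combination w ^ (e - 1) * hone

end ProductIdentities

theorem phik_succ_eq_sum_Ico (lam : ℕ → ℝ) (n y x : ℕ) :
    phik lam (n + 1) y x = -(lam y)⁻¹ * ∑ z ∈ Ico (y + 1) x, phik lam n z x := by
  have hfilter : {z ∈ range x | y < z} = Ico (y + 1) x := by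
    ext z
    simp only [mem_filter, mem_range, mem_Ico]
    omega
  simp only [phik, phiF, ite_mul, zero_mul, sum_ite, sum_const_zero, add_zero, ← mul_sum,
    hfilter]

section Contour

variable {lam : ℕ → ℝ} {R : ℝ}

theorem ofReal_sub_ne_zero_of_le_norm (hpos : ∀ k, 0 < lam k) (hlt : ∀ k, lam k < R) {w : ℂ}
    (hw : R ≤ ‖w‖) (k : ℕ) : (lam k : ℂ) - w ≠ 0 := by
  refine sub_ne_zero.mpr fun h => ?_
  rw [← h, norm_real, Real.norm_of_nonneg (hpos k).le] at hw
  exact (hlt k).not_ge hw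

theorem div_sub_ne_zero_of_le_norm (hpos : ∀ k, 0 < lam k) (hlt : ∀ k, lam k < R) {w : ℂ}
    (hw : R ≤ ‖w‖) (k : ℕ) : (lam k : ℂ) / ((lam k : ℂ) - w) ≠ 0 :=
  div_ne_zero (ofReal_ne_zero.mpr (hpos k).ne') (ofReal_sub_ne_zero_of_le_norm hpos hlt hw k)

theorem circleIntegrable_psiF_mul_pF_mul_zpow (hpos : ∀ k, 0 < lam k) (hlt : ∀ k, lam k < R)
    (y x : ℕ) (e : ℤ) : CircleIntegrable (fun w => psiF lam y w * pF lam x w * w ^ e) 0 R := by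
  have hR : 0 < R := (hpos 0).trans (hlt 0)
  refine ContinuousOn.circleIntegrable hR.le fun w hw => ContinuousAt.continuousWithinAt ?_
  have hwR : R ≤ ‖w‖ := (mem_sphere_zero_iff_norm.mp hw).ge
  have hw0 : w ≠ 0 := norm_pos_iff.mp (hR.trans_le hwR)
  have hsub := ofReal_sub_ne_zero_of_le_norm hpos hlt hwR
  unfold psiF pF
  fun_prop (disch := simp [hw0, hsub])

theorem circleIntegral_psiF_mul_pF_mul_zpow_of_le (hpos : ∀ k, 0 < lam k)
    (hlt : ∀ k, lam k < R) {y x : ℕ} (h : x ≤ y) {e : ℤ} (he : e ≤ -1) :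
    (∮ w in C(0, R), psiF lam y w * pF lam x w * w ^ e) = 0 := by
  have hR : 0 < R := (hpos 0).trans (hlt 0)
  rw [circleIntegral.integral_congr hR.le fun w hw => by
    rw [psiF_mul_pF_of_le (div_sub_ne_zero_of_le_norm hpos hlt
      (mem_sphere_zero_iff_norm.mp hw).ge) (by omega)]]
  refine circleIntegral_prod_div_sub_mul_zpow_eq_zero ⟨y, by simp [h]⟩ (fun k _ => ?_) he
  rw [norm_real, Real.norm_of_nonneg (hpos k).le]
  exact hlt k

theorem circleIntegral_psiF_mul_pF_mul_inv_of_lt (hpos : ∀ k, 0 < lam k)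
    (hlt : ∀ k, lam k < R) {y x : ℕ} (h : y < x) :
    (∮ w in C(0, R), psiF lam y w * pF lam x w * w ^ (-1 : ℤ)) = 2 * π * I := by
  have hR : 0 < R := (hpos 0).trans (hlt 0)
  set P : ℂ → ℂ := fun w => ∏ k ∈ Ico (y + 1) x, ((lam k : ℂ) - w) / (lam k : ℂ)
  have hP : Differentiable ℂ P := by fun_prop
  rw [circleIntegral.integral_congr hR.le (g := fun w => (w - 0)⁻¹ • P w) fun w hw => by
      simp only [sub_zero, smul_eq_mul, P]
      rw [psiF_mul_pF_of_lt (div_sub_ne_zero_of_le_norm hpos hlt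
        (mem_sphere_zero_iff_norm.mp hw).ge) h, zpow_neg_one, mul_comm],
    hP.diffContOnCl.circleIntegral_sub_inv_smul (Metric.mem_ball_self hR)]
  simp [P, prod_ne_zero_iff, (hpos _).ne']

theorem sum_Ico_inv_mul_circleIntegral (hpos : ∀ k, 0 < lam k) (hlt : ∀ k, lam k < R) {y m : ℕ}
    (h : y ≤ m) {n : ℤ} (hn : n ≠ 0) :
    ∑ z ∈ Ico (y + 1) (m + 1),
        (lam z : ℂ)⁻¹ * ∮ w in C(0, R), psiF lam z w * pF lam (m + 1) w * w ^ n
      = -∮ w in C(0, R), psiF lam y w * pF lam (m + 1) w * w ^ (n - 1) := by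
  have hR : 0 < R := (hpos 0).trans (hlt 0)
  have hint : CircleIntegrable (fun w => w ^ (n - 1)) 0 R := by
    simpa using circleIntegrable_sub_zpow_iff (c := 0) (w := 0) (R := R) (n := n - 1) |>.mpr
      (Or.inr (Or.inr (by simp [abs_of_pos hR, hR.ne])))
  have hpow : ∮ w in C(0, R), w ^ (n - 1) = 0 := by
    simpa using circleIntegral.integral_sub_zpow_of_ne (show n - 1 ≠ -1 by omega) 0 0 R
  simp only [← circleIntegral.integral_const_mul]
  rw [← circleIntegral.integral_fun_sum
      (f := fun z w => (lam z : ℂ)⁻¹ * (psiF lam z w * pF lam (m + 1) w * w ^ n)) fun z _ =>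
      (circleIntegrable_psiF_mul_pF_mul_zpow hpos hlt z (m + 1) n).const_fun_smul,
    circleIntegral.integral_congr hR.le fun w hw =>
      sum_Ico_inv_mul_psiF_mul_pF_mul_zpow (div_sub_ne_zero_of_le_norm hpos hlt
        (mem_sphere_zero_iff_norm.mp hw).ge) (ne_zero_of_mem_sphere hR.ne' ⟨w, hw⟩) h n,
    circleIntegral.integral_sub hint
      (circleIntegrable_psiF_mul_pF_mul_zpow hpos hlt y (m + 1) _), hpow, zero_sub]

theorem phik_eq_circleIntegral (hpos : ∀ k, 0 < lam k) (hlt : ∀ k, lam k < R) (n y x : ℕ) :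
    ((phik lam n y x : ℝ) : ℂ) = -(1 / (lam y : ℂ)) * ((2 * (π : ℂ) * I)⁻¹ *
      ∮ w in C(0, R), psiF lam y w * pF lam x w * w ^ (-((n + 1 : ℕ) : ℤ))) := by
  have h2πI : (2 * (π : ℂ) * I) ≠ 0 := by simp [Real.pi_ne_zero, I_ne_zero]
  induction n generalizing y with
  | zero =>
    rw [show -(((0 : ℕ) + 1 : ℕ) : ℤ) = -1 by norm_num]
    rcases lt_or_ge y x with hyx | hxy
    · rw [circleIntegral_psiF_mul_pF_mul_inv_of_lt hpos hlt hyx, inv_mul_cancel₀ h2πI]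
      simp [phik, phiF, hyx]
    · rw [circleIntegral_psiF_mul_pF_mul_zpow_of_le hpos hlt hxy le_rfl]
      simp [phik, phiF, hxy.not_gt]
  | succ n ih =>
    rw [phik_succ_eq_sum_Ico, ofReal_mul, ofReal_neg, ofReal_inv, ofReal_sum]
    simp only [ih]
    rcases lt_or_ge y x with hyx | hxy
    · obtain ⟨m, rfl⟩ : ∃ m, x = m + 1 := ⟨x - 1, by omega⟩
      have h := sum_Ico_inv_mul_circleIntegral hpos hlt (by omega : y ≤ m)
        (n := -((n + 1 : ℕ) : ℤ)) (by omega)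
      rw [show -((n + 1 : ℕ) : ℤ) - 1 = -((n + 1 + 1 : ℕ) : ℤ) by push_cast; ring] at h
      rw [neg_eq_iff_eq_neg.mp h.symm, ← sum_neg_distrib, mul_sum, mul_sum, mul_sum]
      exact sum_congr rfl fun z _ => by ring
    · rw [Ico_eq_empty (by omega), sum_empty,
        circleIntegral_psiF_mul_pF_mul_zpow_of_le hpos hlt hxy (by omega)]
      simp

end Contour

/-- for k ≥ 1,
φ^{(k)}(y,x) = −(1/λ(y)) (1/2πi) ∮_{C_λ} ψ_y(w) p_x(w) w^{−k} dw. -/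
theorem stmt_16 (lam : ℕ → ℝ) (s M : ℝ) (hs : 0 < s)
    (hlb : ∀ x, s ≤ lam x) (hub : ∀ x, lam x ≤ M)
    (R : ℝ) (hR : M < R) (k : ℕ) (hk : 1 ≤ k) (y x : ℕ) :
    ((phik lam (k - 1) y x : ℝ) : ℂ) =
      -(1 / (lam y : ℂ)) * ((2 * (Real.pi : ℂ) * Complex.I)⁻¹ *
        ∮ w in C(0, R), psiF lam y w * pF lam x w * w ^ (-(k : ℤ))) := by
  obtain ⟨n, rfl⟩ : ∃ n, k = n + 1 := ⟨k - 1, by omega⟩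
  rw [Nat.add_sub_cancel]
  exact phik_eq_circleIntegral (fun j => hs.trans_le (hlb j)) (fun j => (hub j).trans_lt hR) n y x
end

section
/- Let λ : ℤ₊ → ℝ satisfy (UB). For every t ≥ 0, every l ∈ ℤ₊ and every u ∈ ℂ, the series Σ_{x ∈ ℤ₊} e^{tL}(l, x) p_x(u) converges absolutely and equals e^{−tu} p_l(u); moreover the convergence is uniform for u in any compact subset of ℂ. -/
open Complex MeasureTheory Finset
open scoped Real ComplexOrder

/-! With `Q_x(w) = p_x(u) / p_x(w)`, each summand is
`e^{tL}(l,x) p_x(u) = -(2πi)⁻¹ ∮ Q_x(w) / (λ(x) - w) · e^{-tw} p_l(w) dw`, and these telescope: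
`Q_x(w) / (λ(x) - w) = (Q_{x+1}(w) - Q_x(w)) / (w - u)`. With Cauchy's formula this gives
`∑_{x<n} e^{tL}(l,x) p_x(u) - e^{-tu} p_l(u) = -(2πi)⁻¹ ∮ Q_n(w) e^{-tw} p_l(w) / (w - u) dw`.
The integrand is holomorphic on `|w| > M`, so the contour may be any circle `|w| = r` with
`r > 2M + |u|`, and there every factor of `Q_n(w)` has modulus at most `(M + |u|) / (r - M) < 1`.
Nothing about `e^{-tw} p_l(w)` matters beyond its being entire: this is the convergence of the
Newton interpolation series, with nodes `λ(k)`, of an entire function.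
-/

open Metric Filter Topology

section Summation

variable {E : Type*} [SeminormedAddCommGroup E]

lemma summable_norm_of_norm_sum_range_sub_le_geometric {f : ℕ → E} {a : E} {A q : ℝ}
    (hq₀ : 0 ≤ q) (hq₁ : q < 1) (h : ∀ n, ‖∑ i ∈ range n, f i - a‖ ≤ A * q ^ n) :
    Summable fun i => ‖f i‖ := by
  refine .of_nonneg_of_le (fun _ => norm_nonneg _) (fun n => ?_)
    ((summable_geometric_of_lt_one hq₀ hq₁).mul_left (A * (q + 1)))
  calc ‖f n‖ = ‖(∑ i ∈ range (n + 1), f i - a) - (∑ i ∈ range n, f i - a)‖ := by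
        rw [sum_range_succ, sub_sub_sub_cancel_right, add_sub_cancel_left]
    _ ≤ A * q ^ (n + 1) + A * q ^ n := norm_sub_le_of_le (h _) (h _)
    _ = A * (q + 1) * q ^ n := by ring

lemma hasSum_of_norm_sum_range_sub_le_geometric {f : ℕ → E} {a : E} {A q : ℝ}
    (hq₀ : 0 ≤ q) (hq₁ : q < 1) (h : ∀ n, ‖∑ i ∈ range n, f i - a‖ ≤ A * q ^ n) :
    HasSum f a := by
  refine (hasSum_iff_tendsto_nat_of_summable_norm
    (summable_norm_of_norm_sum_range_sub_le_geometric hq₀ hq₁ h)).2 ?_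
  refine tendsto_iff_norm_sub_tendsto_zero.2 (squeeze_zero (fun _ => norm_nonneg _) h ?_)
  simpa using (tendsto_pow_atTop_nhds_zero_of_lt_one hq₀ hq₁).const_mul A

lemma tendstoUniformlyOn_of_norm_sub_le {α : Type*} {F : ℕ → α → E} {f : α → E} {s : Set α}
    {b : ℕ → ℝ} (hb : Tendsto b atTop (𝓝 0)) (h : ∀ n, ∀ x ∈ s, ‖F n x - f x‖ ≤ b n) :
    TendstoUniformlyOn F f atTop s := by
  refine Metric.tendstoUniformlyOn_iff.2 fun ε hε => ?_
  filter_upwards [hb.eventually (eventually_lt_nhds hε)] with n hn x hx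
  rw [dist_comm, dist_eq_norm]
  exact (h n x hx).trans_lt hn

end Summation

lemma circleIntegral_eq_of_differentiableOn_norm_gt {E : Type*} [NormedAddCommGroup E]
    [NormedSpace ℂ E] [CompleteSpace E] {f : ℂ → E} {M r₁ r₂ : ℝ} (hM : 0 ≤ M)
    (hf : DifferentiableOn ℂ f {z | M < ‖z‖}) (h₁ : M < r₁) (h₂ : M < r₂) :
    (∮ z in C(0, r₁), f z) = ∮ z in C(0, r₂), f z := by
  wlog hle : r₁ ≤ r₂ generalizing r₁ r₂
  · exact (this h₂ h₁ (le_of_not_ge hle)).symm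
  have hopen : IsOpen {z : ℂ | M < ‖z‖} := isOpen_lt continuous_const continuous_norm
  refine (circleIntegral_eq_of_differentiable_on_annulus_off_countable (hM.trans_lt h₁) hle
    Set.countable_empty (hf.continuousOn.mono fun z hz => ?_) fun z hz => ?_).symm
  · simp only [Set.mem_sdiff, mem_closedBall_zero_iff, mem_ball_zero_iff, not_lt] at hz
    exact h₁.trans_le hz.2
  · simp only [Set.sdiff_empty, Set.mem_sdiff, mem_ball_zero_iff, mem_closedBall_zero_iff,
      not_le] at hz
    exact hf.differentiableAt (hopen.mem_nhds (h₁.trans hz.2))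

section Newton

/-- `pRatio lam u n w = p_n(u) / p_n(w)`. -/
noncomputable def pRatio (lam : ℕ → ℝ) (u : ℂ) (n : ℕ) (w : ℂ) : ℂ :=
  ∏ k ∈ range n, ((lam k : ℂ) - u) / ((lam k : ℂ) - w)

/-- The coefficient of `p_x` in the expansion of `g`: up to the normalisation of `p_x`, this is
Newton's divided difference `g[λ(0), …, λ(x)]`. -/
noncomputable def newtonCoeff (lam : ℕ → ℝ) (R : ℝ) (g : ℂ → ℂ) (x : ℕ) : ℂ :=
  -(1 / (lam x : ℂ)) * ((2 * (π : ℂ) * I)⁻¹ * ∮ w in C(0, R), psiF lam x w * g w)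

variable {lam : ℕ → ℝ} {M : ℝ}

lemma eL_eq_newtonCoeff (R t : ℝ) (l x : ℕ) :
    eL lam R t l x = newtonCoeff lam R (fun w => exp (-(t : ℂ) * w) * pF lam l w) x := by
  simp only [eL, newtonCoeff, mul_assoc, mul_comm (pF lam l _)]

lemma lam_sub_ne_zero (hM : ∀ k, |lam k| ≤ M) {w : ℂ} (hw : M < ‖w‖) (k : ℕ) :
    (lam k : ℂ) - w ≠ 0 := by
  rw [sub_ne_zero]
  rintro rfl
  simp only [norm_real, Real.norm_eq_abs] at hw
  exact (hM k).not_gt hw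

lemma differentiableOn_prod_div_lam_sub (hM : ∀ k, |lam k| ≤ M) (c : ℕ → ℂ) (n : ℕ) :
    DifferentiableOn ℂ (fun w => ∏ k ∈ range n, c k / ((lam k : ℂ) - w)) {w | M < ‖w‖} :=
  DifferentiableOn.fun_finsetProd fun k _ => (differentiableOn_const _).div
    ((differentiableOn_const _).sub differentiableOn_id) fun _ hw => lam_sub_ne_zero hM hw k

lemma differentiable_pF (lam : ℕ → ℝ) (x : ℕ) : Differentiable ℂ (pF lam x) :=
  Differentiable.fun_finsetProd fun _ _ => (differentiable_const _).sub differentiable_id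
    |>.div_const _

lemma newtonCoeff_eq_of_lt (hM : ∀ k, |lam k| ≤ M) {g : ℂ → ℂ} (hg : Differentiable ℂ g)
    {R₁ R₂ : ℝ} (h₁ : M < R₁) (h₂ : M < R₂) : newtonCoeff lam R₁ g = newtonCoeff lam R₂ g := by
  funext x
  have hψ : DifferentiableOn ℂ (psiF lam x) {w | M < ‖w‖} :=
    differentiableOn_prod_div_lam_sub hM _ _
  rw [newtonCoeff, newtonCoeff, circleIntegral_eq_of_differentiableOn_norm_gt
    (f := fun w => psiF lam x w * g w) ((abs_nonneg _).trans (hM 0)) (hψ.mul hg.differentiableOn)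
    h₁ h₂]

lemma pF_div_mul_psiF (hne : ∀ k, lam k ≠ 0) (x : ℕ) (u w : ℂ) :
    pF lam x u / lam x * psiF lam x w = pRatio lam u x w / ((lam x : ℂ) - w) := by
  have hne' : ∀ k, (lam k : ℂ) ≠ 0 := fun k => ofReal_ne_zero.2 (hne k)
  have hfactor : ∀ k, ((lam k : ℂ) - u) / lam k * (lam k / ((lam k : ℂ) - w)) =
      ((lam k : ℂ) - u) / ((lam k : ℂ) - w) := fun k => by
    rw [div_mul_div_comm, mul_comm ((lam k : ℂ) - u), mul_div_mul_left _ _ (hne' k)]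
  have hprod : pF lam x u * ∏ k ∈ range x, (lam k / ((lam k : ℂ) - w)) = pRatio lam u x w := by
    rw [pF, pRatio, ← prod_mul_distrib]
    exact prod_congr rfl fun k _ => hfactor k
  rw [psiF, prod_range_succ, ← hprod]
  field_simp
  rw [mul_comm (lam x : ℂ) (_ - w), mul_right_comm _ (lam x : ℂ), mul_div_mul_right _ _ (hne' x)]

lemma newtonCoeff_mul_pF (hne : ∀ k, lam k ≠ 0) (R : ℝ) (g : ℂ → ℂ) (x : ℕ) (u : ℂ) :
    newtonCoeff lam R g x * pF lam x u =
      -(2 * (π : ℂ) * I)⁻¹ * ∮ w in C(0, R), pRatio lam u x w / ((lam x : ℂ) - w) * g w := by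
  simp_rw [← pF_div_mul_psiF hne x u, mul_assoc, circleIntegral.integral_const_mul, newtonCoeff]
  ring

lemma sum_pRatio_div_lam_sub {u w : ℂ} (hw : ∀ k, (lam k : ℂ) - w ≠ 0) (hwu : w ≠ u) (n : ℕ) :
    ∑ x ∈ range n, pRatio lam u x w / ((lam x : ℂ) - w) = (w - u)⁻¹ * (pRatio lam u n w - 1) := by
  have hstep : ∀ x, pRatio lam u x w / ((lam x : ℂ) - w) =
      (w - u)⁻¹ * (pRatio lam u (x + 1) w - pRatio lam u x w) := fun x => by
    have := sub_ne_zero.2 hwu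
    rw [pRatio, pRatio, prod_range_succ]
    field_simp [hw x]
    ring
  rw [sum_congr rfl fun x _ => hstep x, ← mul_sum, sum_range_sub fun i => pRatio lam u i w]
  simp only [pRatio, prod_range_zero]

lemma sum_newtonCoeff_mul_pF_sub (hne : ∀ k, lam k ≠ 0) (hM : ∀ k, |lam k| ≤ M) {R : ℝ}
    (hR : M < R) {g : ℂ → ℂ} (hg : Differentiable ℂ g) {u : ℂ} (hu : ‖u‖ < R) (n : ℕ) :
    ∑ x ∈ range n, newtonCoeff lam R g x * pF lam x u - g u =
      -((2 * (π : ℂ) * I)⁻¹ • ∮ w in C(0, R), (w - u)⁻¹ • (pRatio lam u n w * g w)) := by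
  have hR₀ : 0 ≤ R := (norm_nonneg u).trans hu.le
  have hsphere : ∀ w ∈ sphere (0 : ℂ) R, M < ‖w‖ := fun w hw => by
    rwa [mem_sphere_zero_iff_norm.1 hw]
  have hsphere_u : ∀ w ∈ sphere (0 : ℂ) R, w - u ≠ 0 := fun w hw => by
    rw [sub_ne_zero]
    rintro rfl
    exact hu.ne (mem_sphere_zero_iff_norm.1 hw)
  have hcont : ∀ m, ContinuousOn (pRatio lam u m) (sphere 0 R) := fun m =>
    (differentiableOn_prod_div_lam_sub hM _ m).continuousOn.mono hsphere
  have hinv : ContinuousOn (fun w => (w - u)⁻¹) (sphere 0 R) :=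
    (continuousOn_id.sub continuousOn_const).inv₀ hsphere_u
  have hterm : ∀ x ∈ range n, CircleIntegrable
      (fun w => pRatio lam u x w / ((lam x : ℂ) - w) * g w) 0 R := fun x _ =>
    (((hcont x).div (continuousOn_const.sub continuousOn_id) fun w hw =>
      lam_sub_ne_zero hM (hsphere w hw) x).mul hg.continuous.continuousOn).circleIntegrable hR₀
  have hcauchy : (2 * (π : ℂ) * I)⁻¹ • (∮ w in C(0, R), (w - u)⁻¹ • g w) = g u :=
    hg.diffContOnCl.two_pi_i_inv_smul_circleIntegral_sub_inv_smul (mem_ball_zero_iff.2 hu)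
  have htelescope : Set.EqOn
      (fun w => ∑ x ∈ range n, pRatio lam u x w / ((lam x : ℂ) - w) * g w)
      (fun w => (w - u)⁻¹ • (pRatio lam u n w * g w) - (w - u)⁻¹ • g w) (sphere 0 R) :=
    fun w hw => by
      simp only [← sum_mul, sum_pRatio_div_lam_sub (lam_sub_ne_zero hM (hsphere w hw))
        (sub_ne_zero.1 (hsphere_u w hw)), smul_eq_mul]
      ring
  have hint₁ : CircleIntegrable (fun w => (w - u)⁻¹ • (pRatio lam u n w * g w)) 0 R :=
    (hinv.smul ((hcont n).mul hg.continuous.continuousOn)).circleIntegrable hR₀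
  have hint₂ : CircleIntegrable (fun w => (w - u)⁻¹ • g w) 0 R :=
    (hinv.smul hg.continuous.continuousOn).circleIntegrable hR₀
  simp_rw [newtonCoeff_mul_pF hne, ← mul_sum]
  rw [← circleIntegral.integral_fun_sum hterm, circleIntegral.integral_congr hR₀ htelescope,
    circleIntegral.integral_sub hint₁ hint₂, ← hcauchy]
  simp only [smul_eq_mul]
  ring

lemma norm_pRatio_le (hM : ∀ k, |lam k| ≤ M) {u w : ℂ} {B : ℝ} (hu : ‖u‖ ≤ B) (hw : M < ‖w‖)
    (n : ℕ) : ‖pRatio lam u n w‖ ≤ ((M + B) / (‖w‖ - M)) ^ n := by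
  rw [pRatio, norm_prod]
  refine (prod_le_prod (fun _ _ => norm_nonneg _) fun k _ => ?_).trans_eq
    (by rw [prod_const, card_range])
  have hk : ‖(lam k : ℂ)‖ ≤ M := by simpa only [norm_real, Real.norm_eq_abs] using hM k
  have hnum : ‖(lam k : ℂ) - u‖ ≤ M + B := (norm_sub_le _ _).trans (add_le_add hk hu)
  have hden : ‖w‖ - M ≤ ‖(lam k : ℂ) - w‖ := by
    linarith [norm_sub_norm_le w (lam k : ℂ), norm_sub_rev w (lam k : ℂ)]
  rw [norm_div]
  exact div_le_div₀ ((norm_nonneg _).trans hnum) hnum (by linarith) hden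

lemma exists_norm_sum_newtonCoeff_mul_pF_sub_le (hne : ∀ k, lam k ≠ 0) (hM : ∀ k, |lam k| ≤ M)
    {R : ℝ} (hR : M < R) {g : ℂ → ℂ} (hg : Differentiable ℂ g) {K : Set ℂ} (hK : IsCompact K) :
    ∃ A q : ℝ, 0 ≤ q ∧ q < 1 ∧ ∀ n, ∀ u ∈ K,
      ‖∑ x ∈ range n, newtonCoeff lam R g x * pF lam x u - g u‖ ≤ A * q ^ n := by
  have hM₀ : 0 ≤ M := (abs_nonneg _).trans (hM 0)
  obtain ⟨B, hB₀, hKB⟩ := hK.isBounded.subset_closedBall_lt 0 0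
  set r := 2 * M + B + 1
  obtain ⟨C, hC⟩ := (isCompact_sphere (0 : ℂ) r).exists_bound_of_continuousOn
    hg.continuous.continuousOn
  have hq₀ : 0 ≤ (M + B) / (r - M) := div_nonneg (by linarith) (by linarith)
  refine ⟨r * (C / (r - B)), (M + B) / (r - M), hq₀, (div_lt_one (by linarith)).2 (by linarith),
    fun n u hu => ?_⟩
  have hu : ‖u‖ ≤ B := mem_closedBall_zero_iff.1 (hKB hu)
  rw [newtonCoeff_eq_of_lt hM hg hR (show M < r by linarith),
    sum_newtonCoeff_mul_pF_sub hne hM (show M < r by linarith) hg (by linarith), norm_neg]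
  refine (circleIntegral.norm_two_pi_i_inv_smul_integral_le_of_norm_le_const
    (C := ((M + B) / (r - M)) ^ n * C / (r - B)) (by positivity) fun w hw => ?_).trans_eq
    (by ring)
  have hgw : ‖g w‖ ≤ C := hC w hw
  have hw : ‖w‖ = r := mem_sphere_zero_iff_norm.1 hw
  have hwu : r - B ≤ ‖w - u‖ := by linarith [norm_sub_norm_le w u]
  rw [norm_smul, norm_mul, norm_inv, inv_mul_eq_div]
  refine div_le_div₀ (mul_nonneg (pow_nonneg hq₀ n) ((norm_nonneg _).trans hgw)) ?_
    (by linarith) hwu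
  exact mul_le_mul (hw ▸ norm_pRatio_le hM hu (by linarith) n) hgw (norm_nonneg _)
    (pow_nonneg hq₀ n)

theorem newtonCoeff_mul_pF_hasSum_and_tendstoUniformlyOn (hne : ∀ k, lam k ≠ 0)
    (hM : ∀ k, |lam k| ≤ M) {R : ℝ} (hR : M < R) {g : ℂ → ℂ} (hg : Differentiable ℂ g) :
    (∀ u : ℂ, HasSum (fun x => newtonCoeff lam R g x * pF lam x u) (g u) ∧
      Summable fun x => ‖newtonCoeff lam R g x * pF lam x u‖) ∧
    ∀ K : Set ℂ, IsCompact K →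
      TendstoUniformlyOn (fun n u => ∑ x ∈ range n, newtonCoeff lam R g x * pF lam x u) g
        atTop K := by
  refine ⟨fun u => ?_, fun K hK => ?_⟩
  · obtain ⟨A, q, hq₀, hq₁, h⟩ :=
      exists_norm_sum_newtonCoeff_mul_pF_sub_le hne hM hR hg (isCompact_singleton (x := u))
    exact ⟨hasSum_of_norm_sum_range_sub_le_geometric hq₀ hq₁ fun n => h n u rfl,
      summable_norm_of_norm_sum_range_sub_le_geometric hq₀ hq₁ fun n => h n u rfl⟩
  · obtain ⟨A, q, hq₀, hq₁, h⟩ := exists_norm_sum_newtonCoeff_mul_pF_sub_le hne hM hR hg hK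
    exact tendstoUniformlyOn_of_norm_sub_le
      (by simpa using (tendsto_pow_atTop_nhds_zero_of_lt_one hq₀ hq₁).const_mul A) h

end Newton

theorem stmt_19_general (lam : ℕ → ℝ) (s M : ℝ) (hs : 0 < s)
    (hlb : ∀ x, s ≤ lam x) (hub : ∀ x, lam x ≤ M)
    (R : ℝ) (hR : M < R) (t : ℝ) (l : ℕ) :
    (∀ u : ℂ,
      HasSum (fun x : ℕ => eL lam R t l x * pF lam x u)
        (Complex.exp (-(t : ℂ) * u) * pF lam l u) ∧
      Summable (fun x : ℕ => ‖eL lam R t l x * pF lam x u‖)) ∧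
    ∀ K : Set ℂ, IsCompact K →
      TendstoUniformlyOn
        (fun (n : ℕ) (u : ℂ) => ∑ x ∈ Finset.range n, eL lam R t l x * pF lam x u)
        (fun u => Complex.exp (-(t : ℂ) * u) * pF lam l u) Filter.atTop K := by
  have hpos : ∀ k, 0 < lam k := fun k => hs.trans_le (hlb k)
  simp only [eL_eq_newtonCoeff]
  exact newtonCoeff_mul_pF_hasSum_and_tendstoUniformlyOn (fun k => (hpos k).ne')
    (fun k => (abs_of_pos (hpos k)).trans_le (hub k)) hR
    ((differentiable_id.const_mul _).cexp.mul (differentiable_pF lam l))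

/-- for every t ≥ 0, l ∈ ℤ₊ and u ∈ ℂ, the series
Σ_{x≥0} e^{tL}(l,x) p_x(u) converges absolutely to e^{−tu} p_l(u), and the convergence
of the partial sums is uniform for u in any compact subset of ℂ. -/
theorem stmt_19 (lam : ℕ → ℝ) (s M : ℝ) (hs : 0 < s)
    (hlb : ∀ x, s ≤ lam x) (hub : ∀ x, lam x ≤ M)
    (R : ℝ) (hR : M < R) (t : ℝ) (ht : 0 ≤ t) (l : ℕ) :
    (∀ u : ℂ,
      HasSum (fun x : ℕ => eL lam R t l x * pF lam x u)
        (Complex.exp (-(t : ℂ) * u) * pF lam l u) ∧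
      Summable (fun x : ℕ => ‖eL lam R t l x * pF lam x u‖)) ∧
    ∀ K : Set ℂ, IsCompact K →
      TendstoUniformlyOn
        (fun (n : ℕ) (u : ℂ) => ∑ x ∈ Finset.range n, eL lam R t l x * pF lam x u)
        (fun u => Complex.exp (-(t : ℂ) * u) * pF lam l u) Filter.atTop K :=
  stmt_19_general lam s M hs hlb hub R hR t l
end
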